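/- arXiv:1710.04039 — 5 statements merged into one kernel-verified Lean document; each statement's English description precedes it below -/
import Mathlib

section
/- For every natural number N ≥ 1, the partial sums of μ(n)/n are bounded by one in absolute value: |∑_{n ≤ N} μ(n)/n| ≤ 1. -/
/-!
Summing `μ * ζ = 1` up to `N` gives `∑_{n ≤ N} μ(n) ⌊N/n⌋ = 1`. Hence
`N · ∑_{n ≤ N} μ(n)/n = 1 + ∑_{n ≤ N} μ(n) {N/n}`, and in the last sum the term `n = 1`
vanishes while the other `N - 1` terms have absolute value at most `1`.
-/

open ArithmeticFunction Finset

theorem Nat.cast_div_eq_cast_div_add_fract {K : Type*} [Field K] [LinearOrder K]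
    [IsStrictOrderedRing K] [FloorRing K] (m n : ℕ) :
    (m : K) / n = (m / n : ℕ) + Int.fract ((m : K) / n) := by
  have h := Int.floor_add_fract ((m : K) / n)
  rw [← Int.natCast_floor_eq_floor (by positivity), Nat.floor_div_eq_div, Int.cast_natCast] at h
  exact h.symm

namespace ArithmeticFunction

theorem sum_Icc_moebius_mul_div_eq_one {R : Type*} [Ring R] {N : ℕ} (hN : 1 ≤ N) :
    ∑ n ∈ Icc 1 N, (moebius n : R) * (N / n : ℕ) = 1 := by
  have h := sum_Ioc_mul_zeta_eq_sum (moebius : ArithmeticFunction R) N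
  rw [coe_moebius_mul_coe_zeta] at h
  simp only [intCoe_apply] at h
  rw [← zero_add 1, Icc_add_one_left_eq_Ioc, ← h]
  simp [one_apply, hN]

theorem abs_sum_Icc_moebius_mul_fract_le {N : ℕ} (hN : 1 ≤ N) :
    |∑ n ∈ Icc 1 N, (moebius n : ℝ) * Int.fract ((N : ℝ) / n)| ≤ N - 1 := by
  rw [← insert_Icc_add_one_left_eq_Icc hN, sum_insert (by simp)]
  simp only [Nat.cast_one, div_one, Int.fract_natCast, mul_zero, zero_add]
  calc _ ≤ ∑ n ∈ Icc 2 N, |(moebius n : ℝ) * Int.fract ((N : ℝ) / n)| :=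
        abs_sum_le_sum_abs _ _
    _ ≤ ∑ n ∈ Icc 2 N, (1 : ℝ) := by
      refine sum_le_sum fun n _ => ?_
      rw [abs_mul, abs_of_nonneg (Int.fract_nonneg ((N : ℝ) / n))]
      exact mul_le_one₀ (by exact_mod_cast abs_moebius_le_one) (Int.fract_nonneg _)
        (Int.fract_lt_one _).le
    _ = N - 1 := by simp [hN]

end ArithmeticFunction

theorem abs_sum_moebius_div_le_one (N : ℕ) (hN : 1 ≤ N) :
    |∑ n ∈ Finset.Icc 1 N, (ArithmeticFunction.moebius n : ℝ) / n| ≤ 1 := by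
  have hN₀ : (0 : ℝ) < N := by exact_mod_cast hN
  have hsplit : (N : ℝ) * ∑ n ∈ Icc 1 N, (moebius n : ℝ) / n
      = 1 + ∑ n ∈ Icc 1 N, (moebius n : ℝ) * Int.fract ((N : ℝ) / n) := by
    rw [← sum_Icc_moebius_mul_div_eq_one (R := ℝ) hN, mul_sum, ← sum_add_distrib]
    refine sum_congr rfl fun n _ => ?_
    rw [← mul_add, ← Nat.cast_div_eq_cast_div_add_fract, mul_div_left_comm]
  have hbound : |(N : ℝ) * ∑ n ∈ Icc 1 N, (moebius n : ℝ) / n| ≤ N :=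
    calc _ ≤ |(1 : ℝ)| + _ := hsplit ▸ abs_add_le _ _
      _ ≤ 1 + (N - 1) := by grw [abs_one, abs_sum_Icc_moebius_mul_fract_le hN]
      _ = N := by ring
  rw [abs_mul, abs_of_pos hN₀] at hbound
  exact (mul_le_iff_le_one_right hN₀).1 hbound
end

section
/- The distance function D on multiplicative functions bounded by 1 satisfies the triangle inequality: for all u, v, w in the class M, D(u, v) ≤ D(u, w) + D(w, v). -/
open scoped ENNReal

/-- The "pretentious" distance between two arithmetic functions, with values in `[0,∞]`. -/
noncomputable def Ddist (u v : ℕ → ℂ) : ℝ≥0∞ :=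
  (∑' p : Nat.Primes,
      ENNReal.ofReal ((1 - (u p * starRingEnd ℂ (v p)).re) / p)) ^ (1 / 2 : ℝ)

/-!
For `‖a‖, ‖b‖ ≤ 1` lift `a` to `(a, ε √(1 - ‖a‖²))` and `b` to `(b, η √(1 - ‖b‖²))` in `ℂ × ℂ`
with the `L²` norm, where `ε, η` are complex numbers of modulus one. The squared distance of the
lifts is `2 (1 - Re (a b̄))` when `ε ⟂ η`, and at least that when `η = -ε`. Lifting `a, b, c` in
the directions `1, i, -1` turns the pointwise inequality
`√(1 - Re (a c̄)) ≤ √(1 - Re (a b̄)) + √(1 - Re (b c̄))` into the triangle inequality in `ℂ × ℂ`;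
summing over primes with weights `1/p`, Minkowski's inequality in `ℓ²` gives the triangle
inequality for `Ddist`.
-/

open scoped ComplexConjugate

theorem ENNReal.Lp_add_le_tsum {ι : Type*} (f g : ι → ℝ≥0∞) {p : ℝ} (hp : 1 ≤ p) :
    (∑' i, (f i + g i) ^ p) ^ (1 / p) ≤
      (∑' i, f i ^ p) ^ (1 / p) + (∑' i, g i ^ p) ^ (1 / p) := by
  have hp₀ : 0 < p := zero_lt_one.trans_le hp
  rw [one_div, ENNReal.rpow_inv_le_iff hp₀, ENNReal.tsum_eq_iSup_sum]
  refine iSup_le fun s => (ENNReal.rpow_inv_le_iff hp₀).1 ?_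
  rw [← one_div]
  refine (ENNReal.Lp_add_le s f g hp).trans (add_le_add ?_ ?_) <;>
    exact ENNReal.rpow_le_rpow (ENNReal.sum_le_tsum s) (by positivity)

theorem ENNReal.ofReal_sqrt_sq (x : ℝ) : ENNReal.ofReal √x ^ 2 = ENNReal.ofReal x := by
  rw [← ENNReal.ofReal_pow (Real.sqrt_nonneg x), Real.sq_sqrt', ENNReal.ofReal_max,
    ENNReal.ofReal_zero, max_zero]

noncomputable def sphereLift (ε a : ℂ) : WithLp 2 (ℂ × ℂ) :=
  WithLp.toLp 2 (a, ε * √(1 - ‖a‖ ^ 2))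

theorem dist_sphereLift_sq {ε η a b : ℂ} (hε : ‖ε‖ = 1) (hη : ‖η‖ = 1) (ha : ‖a‖ ≤ 1)
    (hb : ‖b‖ ≤ 1) :
    dist (sphereLift ε a) (sphereLift η b) ^ 2 =
      2 * (1 - (a * conj b).re) - 2 * (ε * conj η).re * √(1 - ‖a‖ ^ 2) * √(1 - ‖b‖ ^ 2) := by
  have hra : √(1 - ‖a‖ ^ 2) ^ 2 = 1 - ‖a‖ ^ 2 := Real.sq_sqrt (by nlinarith [norm_nonneg a])
  have hrb : √(1 - ‖b‖ ^ 2) ^ 2 = 1 - ‖b‖ ^ 2 := Real.sq_sqrt (by nlinarith [norm_nonneg b])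
  rw [dist_eq_norm, WithLp.prod_norm_sq_eq_of_L2]
  simp only [sphereLift, WithLp.sub_fst, WithLp.sub_snd, WithLp.toLp_fst, WithLp.toLp_snd]
  generalize √(1 - ‖a‖ ^ 2) = r at hra ⊢
  generalize √(1 - ‖b‖ ^ 2) = s at hrb ⊢
  have hcross : ε * r * conj (η * s) = ε * conj η * ((r * s : ℝ) : ℂ) := by
    simp only [map_mul, Complex.conj_ofReal, Complex.ofReal_mul]
    ring
  rw [Complex.sq_norm, Complex.sq_norm, Complex.normSq_sub, Complex.normSq_sub, hcross,
    Complex.re_mul_ofReal, Complex.normSq_mul, Complex.normSq_mul, Complex.normSq_ofReal,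
    Complex.normSq_ofReal]
  simp only [Complex.normSq_eq_norm_sq, hε, hη]
  linear_combination hra + hrb

theorem dist_sphereLift_of_re_mul_conj_eq_zero {ε η a b : ℂ} (hε : ‖ε‖ = 1) (hη : ‖η‖ = 1)
    (ha : ‖a‖ ≤ 1) (hb : ‖b‖ ≤ 1) (hεη : (ε * conj η).re = 0) :
    dist (sphereLift ε a) (sphereLift η b) = √2 * √(1 - (a * conj b).re) := by
  rw [← Real.sqrt_mul zero_le_two, ← Real.sqrt_sq dist_nonneg, dist_sphereLift_sq hε hη ha hb,
    hεη, mul_zero, zero_mul, zero_mul, sub_zero]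

theorem sqrt_one_sub_re_mul_conj_le {a b c : ℂ} (ha : ‖a‖ ≤ 1) (hb : ‖b‖ ≤ 1) (hc : ‖c‖ ≤ 1) :
    √(1 - (a * conj c).re) ≤ √(1 - (a * conj b).re) + √(1 - (b * conj c).re) := by
  have hAC := dist_sphereLift_sq (ε := 1) (η := -1) (by simp) (by simp) ha hc
  rw [show ((1 : ℂ) * conj (-1)).re = -1 by simp] at hAC
  refine le_of_mul_le_mul_left ?_ (by positivity : (0 : ℝ) < √2)
  calc √2 * √(1 - (a * conj c).re)
      ≤ dist (sphereLift 1 a) (sphereLift (-1) c) := by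
        rw [← Real.sqrt_mul zero_le_two, ← Real.sqrt_sq dist_nonneg, hAC]
        gcongr
        nlinarith [Real.sqrt_nonneg (1 - ‖a‖ ^ 2), Real.sqrt_nonneg (1 - ‖c‖ ^ 2)]
    _ ≤ dist (sphereLift 1 a) (sphereLift Complex.I b) +
          dist (sphereLift Complex.I b) (sphereLift (-1) c) := dist_triangle _ _ _
    _ = √2 * (√(1 - (a * conj b).re) + √(1 - (b * conj c).re)) := by
        rw [dist_sphereLift_of_re_mul_conj_eq_zero (by simp) (by simp) ha hb (by simp),
          dist_sphereLift_of_re_mul_conj_eq_zero (by simp) (by simp) hb hc (by simp), mul_add]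

theorem Ddist_eq_tsum_sq (u v : ℕ → ℂ) :
    Ddist u v = (∑' p : Nat.Primes,
      ENNReal.ofReal √((1 - (u p * conj (v p)).re) / p) ^ (2 : ℝ)) ^ (1 / 2 : ℝ) := by
  simp only [Ddist, ENNReal.rpow_two, ENNReal.ofReal_sqrt_sq]

theorem Ddist_triangle_general (u v w : ℕ → ℂ)
    (hub : ∀ n : ℕ, ‖u n‖ ≤ 1)
    (hvb : ∀ n : ℕ, ‖v n‖ ≤ 1)
    (hwb : ∀ n : ℕ, ‖w n‖ ≤ 1) :
    Ddist u v ≤ Ddist u w + Ddist w v := by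
  have pointwise (p : Nat.Primes) :
      ENNReal.ofReal √((1 - (u p * conj (v p)).re) / p) ≤
        ENNReal.ofReal √((1 - (u p * conj (w p)).re) / p) +
          ENNReal.ofReal √((1 - (w p * conj (v p)).re) / p) := by
    rw [← ENNReal.ofReal_add (Real.sqrt_nonneg _) (Real.sqrt_nonneg _)]
    refine ENNReal.ofReal_le_ofReal ?_
    simp only [Real.sqrt_div' _ (Nat.cast_nonneg (p : ℕ)), ← add_div]
    gcongr
    exact sqrt_one_sub_re_mul_conj_le (hub p) (hwb p) (hvb p)
  rw [Ddist_eq_tsum_sq, Ddist_eq_tsum_sq, Ddist_eq_tsum_sq]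
  calc _ ≤ (∑' p : Nat.Primes, (ENNReal.ofReal √((1 - (u p * conj (w p)).re) / p) +
          ENNReal.ofReal √((1 - (w p * conj (v p)).re) / p)) ^ (2 : ℝ)) ^ (1 / 2 : ℝ) := by
        gcongr with p
        exact pointwise p
    _ ≤ _ := ENNReal.Lp_add_le_tsum _ _ one_le_two

theorem Ddist_triangle (u v w : ℕ → ℂ)
    (hu1 : u 1 = 1) (hu : ∀ m n : ℕ, Nat.Coprime m n → u (m * n) = u m * u n)
    (hub : ∀ n : ℕ, ‖u n‖ ≤ 1)
    (hv1 : v 1 = 1) (hv : ∀ m n : ℕ, Nat.Coprime m n → v (m * n) = v m * v n)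
    (hvb : ∀ n : ℕ, ‖v n‖ ≤ 1)
    (hw1 : w 1 = 1) (hw : ∀ m n : ℕ, Nat.Coprime m n → w (m * n) = w m * w n)
    (hwb : ∀ n : ℕ, ‖w n‖ ≤ 1) :
    Ddist u v ≤ Ddist u w + Ddist w v :=
  Ddist_triangle_general u v w hub hvb hwb
end

section
/- If u is a real-valued multiplicative function with |u| ≤ 1, then for every real t, D(1, n^{2it}) ≤ 2 · D(u, n^{it}), where n^{it} denotes the Archimedean character n ↦ n^{it}. -/
/-! For real `u`, the summand of `D(u, n^{it})²` at `p` is `(1 - u(p) cos(t log p)) / p`, and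
`1 - cos 2θ ≤ 4 (1 - x cos θ)` whenever `|x| ≤ 1`. Comparing the two series prime by prime and
taking square roots gives the factor `2`. -/

open scoped ENNReal

open Complex in
theorem re_natCast_cpow_I_mul {n : ℕ} (hn : n ≠ 0) (s : ℝ) :
    ((n : ℂ) ^ (I * s)).re = Real.cos (s * Real.log n) := by
  rw [cpow_def_of_ne_zero (by exact_mod_cast hn), ← natCast_log,
    show (Real.log n : ℂ) * (I * s) = ((s * Real.log n : ℝ) : ℂ) * I by push_cast; ring,
    exp_ofReal_mul_I_re]

theorem Ddist_le_mul_of_forall_prime {u v u' v' : ℕ → ℂ} (c : NNReal)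
    (h : ∀ p : ℕ, p.Prime → 1 - (u p * starRingEnd ℂ (v p)).re ≤
      c ^ 2 * (1 - (u' p * starRingEnd ℂ (v' p)).re)) :
    Ddist u v ≤ c * Ddist u' v' := by
  have hsum : ∑' p : Nat.Primes, ENNReal.ofReal ((1 - (u p * starRingEnd ℂ (v p)).re) / p) ≤
      (c : ℝ≥0∞) ^ 2 *
        ∑' p : Nat.Primes, ENNReal.ofReal ((1 - (u' p * starRingEnd ℂ (v' p)).re) / p) := by
    rw [← ENNReal.tsum_mul_left]
    refine ENNReal.tsum_le_tsum fun p => ?_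
    rw [← ENNReal.ofReal_coe_nnreal, ← ENNReal.ofReal_pow c.coe_nonneg,
      ← ENNReal.ofReal_mul (by positivity), ← mul_div_assoc]
    exact ENNReal.ofReal_le_ofReal (div_le_div_of_nonneg_right (h p p.prop) (by positivity))
  have hsqrt : ((c : ℝ≥0∞) ^ 2) ^ (1 / 2 : ℝ) = c := by
    rw [← ENNReal.rpow_natCast, ← ENNReal.rpow_mul]
    norm_num
  unfold Ddist
  calc _ ≤ ((c : ℝ≥0∞) ^ 2 * ∑' p : Nat.Primes,
          ENNReal.ofReal ((1 - (u' p * starRingEnd ℂ (v' p)).re) / p)) ^ (1 / 2 : ℝ) :=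
        ENNReal.rpow_le_rpow hsum (by norm_num)
    _ = _ := by rw [ENNReal.mul_rpow_of_nonneg _ _ (by norm_num), hsqrt]

-- The gap is `2 (x - cos θ) ^ 2 + 2 (1 - x ^ 2)`.
theorem one_sub_cos_two_mul_le {x : ℝ} (hx : |x| ≤ 1) (θ : ℝ) :
    1 - Real.cos (2 * θ) ≤ 2 ^ 2 * (1 - x * Real.cos θ) := by
  rw [Real.cos_two_mul]
  nlinarith [sq_nonneg (x - Real.cos θ), sq_le_one_iff_abs_le_one x |>.mpr hx]

theorem Ddist_one_arch_le_two_mul_general (u : ℕ → ℂ) (t : ℝ)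
    (hub : ∀ n : ℕ, ‖u n‖ ≤ 1)
    (hreal : ∀ n : ℕ, (u n).im = 0) :
    Ddist (fun _ => 1) (fun n => (n : ℂ) ^ (Complex.I * (2 * t : ℝ))) ≤
      2 * Ddist u (fun n => (n : ℂ) ^ (Complex.I * (t : ℝ))) := by
  refine mod_cast Ddist_le_mul_of_forall_prime 2 fun p hp => ?_
  have hu : |(u p).re| ≤ 1 := (Complex.abs_re_le_norm _).trans (hub p)
  rw [one_mul, Complex.conj_re, Complex.mul_re, Complex.conj_re, Complex.conj_im, hreal,
    re_natCast_cpow_I_mul hp.ne_zero, re_natCast_cpow_I_mul hp.ne_zero, zero_mul, sub_zero,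
    mul_assoc, NNReal.coe_ofNat]
  exact one_sub_cos_two_mul_le hu (t * Real.log p)

theorem Ddist_one_arch_le_two_mul (u : ℕ → ℂ) (t : ℝ)
    (hu1 : u 1 = 1) (hu : ∀ m n : ℕ, Nat.Coprime m n → u (m * n) = u m * u n)
    (hub : ∀ n : ℕ, ‖u n‖ ≤ 1)
    (hreal : ∀ n : ℕ, (u n).im = 0) :
    Ddist (fun _ => 1) (fun n => (n : ℂ) ^ (Complex.I * (2 * t : ℝ))) ≤
      2 * Ddist u (fun n => (n : ℂ) ^ (Complex.I * (t : ℝ))) :=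
  Ddist_one_arch_le_two_mul_general u t hub hreal
end

section
/- If for every ε > 0 the Mertens function satisfies M(x) = ∑_{n ≤ x} μ(n) = O_ε(x^{1/2 + ε}), then the Riemann Hypothesis holds. -/
/-!
Abel summation gives `1 / ζ(s) = L(μ, s) = s ∫₁^∞ M(t) t^(-s-1) dt` for `Re s > 1`. If
`M(t) = O(t^(1/2 + ε))` for every `ε > 0`, the integral is holomorphic on `Re s > 1/2`, so by
analytic continuation `ζ` times a holomorphic function is `1` on that half-plane and `ζ` has no
zeros there. The functional equation `Λ(1 - s) = Λ(s)` reflects any nontrivial zero with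
`Re s < 1/2` into it.
-/

open ArithmeticFunction Finset

open Complex MeasureTheory Filter Set Asymptotics Topology

noncomputable def summatory (f : ℕ → ℂ) (t : ℝ) : ℂ := ∑ k ∈ Icc 1 ⌊t⌋₊, f k

section Summatory

variable {f : ℕ → ℂ}

lemma summatory_natCast (n : ℕ) : summatory f n = ∑ k ∈ Icc 1 n, f k := by
  rw [summatory, Nat.floor_natCast]

lemma summatory_eq_zero_of_lt_one {t : ℝ} (ht : t < 1) : summatory f t = 0 := by
  simp [summatory, Nat.floor_eq_zero.mpr ht]

lemma norm_summatory_le {t b : ℝ} (htb : t ≤ b) :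
    ‖summatory f t‖ ≤ ∑ k ∈ Icc 1 ⌊b⌋₊, ‖f k‖ :=
  (norm_sum_le _ _).trans <| sum_le_sum_of_subset_of_nonneg
    (Icc_subset_Icc_right (Nat.floor_mono htb)) fun _ _ _ ↦ norm_nonneg _

lemma measurable_summatory : Measurable (summatory f) :=
  (measurable_from_top (f := fun n : ℕ ↦ ∑ k ∈ Icc 1 n, f k)).comp Nat.measurable_floor

lemma locallyIntegrable_summatory : LocallyIntegrable (summatory f) := fun x ↦
  ⟨Icc (x - 1) (x + 1), Icc_mem_nhds (by linarith) (by linarith),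
    Measure.integrableOn_of_bounded (by simp) measurable_summatory.aestronglyMeasurable
      ((ae_restrict_iff' measurableSet_Icc).mpr (ae_of_all _ fun _ ht ↦ norm_summatory_le ht.2))⟩

lemma summatory_isBigO_nhdsGT_zero (c : ℝ) : summatory f =O[𝓝[>] 0] (· ^ c) := by
  refine (isBigO_zero _ _).congr' ?_ EventuallyEq.rfl
  filter_upwards [Ioo_mem_nhdsGT zero_lt_one] with t ht
  exact (summatory_eq_zero_of_lt_one ht.2).symm

lemma mellin_summatory_neg (s : ℂ) :
    mellin (summatory f) (-s) = ∫ t in Ioi 1, summatory f t * t ^ (-(s + 1)) :=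
  calc mellin (summatory f) (-s) = ∫ t in Ioi 0, summatory f t * t ^ (-(s + 1)) := by
        refine setIntegral_congr_fun measurableSet_Ioi fun t _ ↦ ?_
        rw [smul_eq_mul, mul_comm, neg_add']
    _ = ∫ t in Ici 1, summatory f t * t ^ (-(s + 1)) := by
        refine setIntegral_eq_of_subset_of_forall_sdiff_eq_zero measurableSet_Ioi
          (Ici_subset_Ioi.mpr zero_lt_one) fun t ht ↦ ?_
        rw [summatory_eq_zero_of_lt_one (not_le.mp ht.2), zero_mul]
    _ = ∫ t in Ioi 1, summatory f t * t ^ (-(s + 1)) := integral_Ici_eq_integral_Ioi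

lemma differentiableAt_integral_summatory_mul_cpow {σ : ℝ} (hO : summatory f =O[atTop] (· ^ σ))
    {s : ℂ} (hs : σ < s.re) :
    DifferentiableAt ℂ (fun s : ℂ ↦ ∫ t in Ioi 1, summatory f t * t ^ (-(s + 1))) s := by
  simp_rw [← mellin_summatory_neg]
  have hM : DifferentiableAt ℂ (mellin (summatory f)) (-s) := by
    refine mellin_differentiableAt_of_isBigO_rpow (a := -σ) (b := -s.re - 1)
      (locallyIntegrable_summatory.locallyIntegrableOn _) ?_ ?_ (summatory_isBigO_nhdsGT_zero _) ?_
    · simpa only [neg_neg] using hO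
    · rw [neg_re]; linarith
    · rw [neg_re]; linarith
  exact hM.comp s differentiableAt_id.neg

lemma LSeries_eq_mul_integral_summatory {σ : ℝ} (hσ : 0 ≤ σ) (hO : summatory f =O[atTop] (· ^ σ))
    {s : ℂ} (hs : σ < s.re) (hS : LSeriesSummable f s) :
    LSeries f s = s * ∫ t in Ioi 1, summatory f t * t ^ (-(s + 1)) :=
  LSeries_eq_mul_integral f hσ hs hS <| by
    simpa only [Function.comp_def, summatory_natCast] using
      hO.comp_tendsto tendsto_natCast_atTop_atTop

end Summatory

lemma riemannZeta_ne_zero_of_mul_eq_one {σ : ℝ} {G : ℂ → ℂ}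
    (hG : DifferentiableOn ℂ G {s | σ < s.re})
    (hζG : ∀ s : ℂ, 1 < s.re → σ < s.re → riemannZeta s * G s = 1)
    {s : ℂ} (hs : σ < s.re) (hs1 : s ≠ 1) : riemannZeta s ≠ 0 := by
  have hV : IsOpen {s : ℂ | σ < s.re} := isOpen_lt continuous_const continuous_re
  -- `ζ₁`, the entire completion of `(s - 1) ζ(s)`, lets the identity theorem ignore the pole.
  have hζ₁ {w : ℂ} (hw : w ≠ 1) : riemannZeta₁ w = (w - 1) * riemannZeta w := by
    rw [riemannZeta_eq_inv_sub_mul hw, mul_inv_cancel_left₀ (sub_ne_zero.mpr hw)]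
  set w₀ : ℂ := ((max σ 1 + 1 : ℝ) : ℂ)
  have hw₀ : max σ 1 < w₀.re := by simp [w₀]
  have hEq : EqOn (fun w ↦ riemannZeta₁ w * G w) (· - 1) {s | σ < s.re} := by
    refine AnalyticOnNhd.eqOn_of_preconnected_of_eventuallyEq
      ((differentiable_riemannZeta₁.differentiableOn.mul hG).analyticOnNhd hV)
      ((differentiable_id.sub_const 1).differentiableOn.analyticOnNhd hV)
      (convex_halfSpace_re_gt σ).isPreconnected ((le_max_left _ _).trans_lt hw₀) ?_
    filter_upwards [(isOpen_lt continuous_const continuous_re).mem_nhds hw₀] with w hw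
    have hw1 : 1 < w.re := (le_max_right _ _).trans_lt hw
    have hwσ : σ < w.re := (le_max_left _ _).trans_lt hw
    rw [hζ₁ (ne_of_apply_ne re (by simpa using hw1.ne')), mul_assoc, hζG w hw1 hwσ, mul_one]
  intro hζs
  have := hEq hs
  simp only [hζ₁ hs1, hζs, mul_zero, zero_mul] at this
  exact hs1 (sub_eq_zero.mp this.symm)

lemma riemannZeta_ne_zero_of_summatory_moebius_isBigO {σ : ℝ} (hσ : 0 ≤ σ)
    (hO : summatory (fun n ↦ (moebius n : ℂ)) =O[atTop] (· ^ σ)) {s : ℂ} (hs : σ < s.re)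
    (hs1 : s ≠ 1) : riemannZeta s ≠ 0 := by
  refine riemannZeta_ne_zero_of_mul_eq_one
    (G := fun s ↦ s * ∫ t in Ioi 1, summatory (fun n ↦ (moebius n : ℂ)) t * t ^ (-(s + 1)))
    (fun w hw ↦ ?_) (fun w hw1 hwσ ↦ ?_) hs hs1
  · exact (differentiableAt_id.mul
      (differentiableAt_integral_summatory_mul_cpow hO hw)).differentiableWithinAt
  · rw [← LSeries_eq_mul_integral_summatory hσ hO hwσ (LSeriesSummable_moebius_iff.mpr hw1),
      ← LSeries_zeta_eq_riemannZeta hw1]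
    exact LSeries_zeta_mul_Lseries_moebius hw1

lemma ne_zero_of_riemannZeta_eq_zero {s : ℂ} (hs : riemannZeta s = 0) : s ≠ 0 := by
  rintro rfl
  norm_num [riemannZeta_zero] at hs

lemma riemannZeta_one_sub_eq_zero {s : ℂ} (hs : riemannZeta s = 0)
    (htriv : ¬∃ n : ℕ, s = -2 * (n + 1)) (hs1 : s ≠ 1) : riemannZeta (1 - s) = 0 := by
  have hs0 := ne_zero_of_riemannZeta_eq_zero hs
  have hΓ : Gammaℝ s ≠ 0 := by
    rw [Ne, Gammaℝ_eq_zero_iff]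
    rintro ⟨_ | n, rfl⟩
    · simp at hs0
    · exact htriv ⟨n, by push_cast; ring⟩
  have hΛ : completedRiemannZeta s = 0 := by
    rw [riemannZeta_def_of_ne_zero hs0, div_eq_zero_iff] at hs
    exact hs.resolve_right hΓ
  rw [riemannZeta_def_of_ne_zero (sub_ne_zero.mpr hs1.symm), completedRiemannZeta_one_sub, hΛ,
    zero_div]

lemma riemannHypothesis_of_riemannZeta_ne_zero
    (h : ∀ s : ℂ, 1 / 2 < s.re → s ≠ 1 → riemannZeta s ≠ 0) : RiemannHypothesis := by
  intro s hs htriv hs1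
  by_contra hre
  rcases lt_or_gt_of_ne hre with hlt | hgt
  · refine h (1 - s) ?_ ?_ (riemannZeta_one_sub_eq_zero hs htriv hs1)
    · rw [sub_re, one_re]; linarith
    · simpa using ne_zero_of_riemannZeta_eq_zero hs
  · exact h s hgt hs1 hs

lemma norm_summatory_moebius (x : ℝ) :
    ‖summatory (fun n ↦ (moebius n : ℂ)) x‖ = |∑ n ∈ Icc 1 ⌊x⌋₊, (moebius n : ℝ)| := by
  rw [summatory, ← Real.norm_eq_abs, ← norm_real]
  push_cast
  rfl

theorem mertens_bound_implies_RH
    (h : ∀ ε : ℝ, 0 < ε → ∃ C : ℝ, ∀ x : ℝ, 1 ≤ x →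
      |∑ n ∈ Finset.Icc 1 ⌊x⌋₊, (ArithmeticFunction.moebius n : ℝ)| ≤
        C * x ^ ((1 : ℝ) / 2 + ε)) :
    RiemannHypothesis := by
  have hO (ε : ℝ) (hε : 0 < ε) :
      summatory (fun n ↦ (moebius n : ℂ)) =O[atTop] (· ^ ((1 : ℝ) / 2 + ε)) := by
    obtain ⟨C, hC⟩ := h ε hε
    refine IsBigO.of_bound C ?_
    filter_upwards [eventually_ge_atTop 1] with x hx
    rw [norm_summatory_moebius, Real.norm_of_nonneg (Real.rpow_nonneg (by linarith) _)]
    exact hC x hx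
  refine riemannHypothesis_of_riemannZeta_ne_zero fun s hs hs1 ↦ ?_
  exact riemannZeta_ne_zero_of_summatory_moebius_isBigO (σ := 1 / 2 + (s.re - 1 / 2) / 2)
    (by linarith) (hO _ (by linarith)) (by linarith) hs1
end

section
/- For a multiplicative function u bounded by 1, if the mean M(χ · u) = lim_{N→∞} (1/N) ∑_{n ≤ N} χ(n) u(n) exists and equals 0 for every Dirichlet character χ of every modulus, then u is aperiodic: for all a, r ∈ ℕ, (1/N) ∑_{n ≤ N} u(an + r) → 0. -/
open Filter Finset

/-!
Write `m = v * w` with `v` the largest divisor of `m` whose prime factors divide `a`, so that `w`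
is coprime to `a`. By multiplicativity, the sum of `u` over `m ≤ M` in a residue class `c` mod `a`
becomes `∑ v, u v * ∑_{w ≤ M / v} u w 1[w is a unit, v * w = c]`. Each inner sum restricts `u` to
finitely many unit residue classes, and by orthogonality their indicators are combinations of
Dirichlet characters, so the inner sum is `o(M / v)`. Since `∑ 1 / v` over the `v` whose prime
factors divide `a` converges (an Euler product), dominated convergence makes the whole sum `o(M)`.
The progression `a * n + r` is such a residue class, up to finitely many terms.
-/

namespace Nat

lemma dvd_pow_self_of_mem_factoredNumbers {a v : ℕ} (ha : a ≠ 0)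
    (hv : v ∈ factoredNumbers a.primeFactors) : v ∣ a ^ v := by
  have hv0 := ne_zero_of_mem_factoredNumbers hv
  refine (factorization_le_iff_dvd hv0 (pow_ne_zero _ ha)).mp fun p => ?_
  rw [factorization_pow, Finsupp.smul_apply, smul_eq_mul]
  by_cases hp : p ∈ v.primeFactors
  · have hpa : p ∈ a.primeFactors := primeFactors_subset_of_mem_factoredNumbers hv hp
    have : 0 < a.factorization p :=
      (prime_of_mem_primeFactors hpa).factorization_pos_of_dvd ha (dvd_of_mem_primeFactors hpa)
    nlinarith [factorization_lt p hv0]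
  · rw [← support_factorization, Finsupp.notMem_support_iff] at hp
    simp [hp]

lemma coprime_of_mem_factoredNumbers {a v w : ℕ} (hv : v ∈ factoredNumbers a.primeFactors)
    (hw : w.Coprime a) : v.Coprime w :=
  coprime_of_dvd fun _ hp hpv hpw => (hp.coprime_iff_not_dvd.mp (hw.coprime_dvd_left hpw))
    (dvd_of_mem_primeFactors (primeFactors_subset_of_mem_factoredNumbers hv
      (mem_primeFactors.mpr ⟨hp, hpv, ne_zero_of_mem_factoredNumbers hv⟩)))

/-- The largest divisor of `m` all of whose prime factors divide `a`. -/
def factoredPart (a m : ℕ) : ℕ := m.gcd (a ^ m)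

lemma factoredPart_dvd (a m : ℕ) : factoredPart a m ∣ m := gcd_dvd_left _ _

lemma factoredPart_mem_factoredNumbers {a m : ℕ} (ha : a ≠ 0) (hm : m ≠ 0) :
    factoredPart a m ∈ factoredNumbers a.primeFactors := by
  refine mem_factoredNumbers_of_primeFactors_subset (gcd_ne_zero_left hm) ?_
  rw [← primeFactors_pow a hm]
  exact primeFactors_mono (gcd_dvd_right _ _) (pow_ne_zero _ ha)

lemma coprime_div_factoredPart {a m : ℕ} (ha : a ≠ 0) (hm : m ≠ 0) :
    (m / factoredPart a m).Coprime a := by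
  set v := factoredPart a m
  have hv := factoredPart_mem_factoredNumbers ha hm
  have hv0 := pos_of_ne_zero (ne_zero_of_mem_factoredNumbers hv)
  refine coprime_of_dvd fun p hp hpw hpa => ?_
  have hvp : v * p ∣ m := by
    simpa only [v, Nat.mul_div_cancel' (factoredPart_dvd a m)] using mul_dvd_mul_left v hpw
  have hvp_mem : v * p ∈ factoredNumbers a.primeFactors :=
    mul_mem_factoredNumbers hv (mem_factoredNumbers_of_primeFactors_subset hp.ne_zero
      (by simp [hp, hpa, ha]))
  have : v * p ∣ v := dvd_gcd hvp ((dvd_pow_self_of_mem_factoredNumbers ha hvp_mem).trans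
    (pow_dvd_pow a (le_of_dvd (pos_of_ne_zero hm) hvp)))
  nlinarith [le_of_dvd hv0 this, hp.two_le]

lemma factoredPart_mul {a v w : ℕ} (ha : a ≠ 0) (hv : v ∈ factoredNumbers a.primeFactors)
    (hw : w.Coprime a) (hw0 : w ≠ 0) : factoredPart a (v * w) = v := by
  rw [factoredPart, Coprime.gcd_mul_right_cancel v (hw.pow_right _)]
  exact gcd_eq_left ((dvd_pow_self_of_mem_factoredNumbers ha hv).trans
    (pow_dvd_pow a (Nat.le_mul_of_pos_right v (pos_of_ne_zero hw0))))

open scoped Classical in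
lemma sum_Icc_eq_sum_factoredNumbers_mul_coprime {β : Type*} [AddCommMonoid β] {a : ℕ}
    (ha : a ≠ 0) (G : ℕ → β) (M : ℕ) :
    ∑ m ∈ Icc 1 M, G m = ∑ v ∈ Icc 1 M with v ∈ factoredNumbers a.primeFactors,
      ∑ w ∈ Icc 1 (M / v) with w.Coprime a, G (v * w) := by
  rw [sum_sigma']
  refine sum_nbij' (fun m => ⟨factoredPart a m, m / factoredPart a m⟩) (fun x => x.1 * x.2)
    ?_ ?_ ?_ ?_ ?_
  · intro m hm
    simp only [mem_Icc, mem_sigma, mem_filter] at hm ⊢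
    have hm0 : m ≠ 0 := by omega
    have hv := factoredPart_mem_factoredNumbers ha hm0
    have hv0 := pos_of_ne_zero (ne_zero_of_mem_factoredNumbers hv)
    have hvm := le_of_dvd (by omega) (factoredPart_dvd a m)
    exact ⟨⟨⟨hv0, hvm.trans hm.2⟩, hv⟩, ⟨Nat.div_pos hvm hv0, Nat.div_le_div_right hm.2⟩,
      coprime_div_factoredPart ha hm0⟩
  · rintro ⟨v, w⟩ hx
    simp only [mem_Icc, mem_sigma, mem_filter] at hx ⊢
    refine ⟨Nat.mul_pos (by omega) (by omega), ?_⟩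
    rw [mul_comm]
    exact (le_div_iff_mul_le (by omega)).mp hx.2.1.2
  · intro m _
    exact Nat.mul_div_cancel' (factoredPart_dvd a m)
  · rintro ⟨v, w⟩ hx
    simp only [mem_Icc, mem_sigma, mem_filter] at hx
    simp only [factoredPart_mul ha hx.1.2 hx.2.2 (by omega),
      Nat.mul_div_cancel_left w (by omega : 0 < v)]
  · intro m _
    simp only [Nat.mul_div_cancel' (factoredPart_dvd a m)]

end Nat

def HasMeanZero (f : ℕ → ℂ) : Prop :=
  Tendsto (fun N : ℕ => (N : ℂ)⁻¹ * ∑ n ∈ Icc 1 N, f n) atTop (nhds 0)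

lemma HasMeanZero.const_mul {f : ℕ → ℂ} (hf : HasMeanZero f) (c : ℂ) :
    HasMeanZero fun n => c * f n := by
  simpa [HasMeanZero, ← mul_sum, mul_left_comm] using Tendsto.const_mul c hf

lemma hasMeanZero_finset_sum {ι : Type*} (s : Finset ι) {f : ι → ℕ → ℂ}
    (hf : ∀ i ∈ s, HasMeanZero (f i)) : HasMeanZero fun n => ∑ i ∈ s, f i n := by
  unfold HasMeanZero
  simpa [sum_comm (s := Icc 1 _), mul_sum] using tendsto_finsetSum s hf

lemma HasMeanZero.tendsto_inv_mul_sum_comp {f : ℕ → ℂ} (hf : HasMeanZero f) {g : ℕ → ℕ}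
    (hg : Tendsto g atTop atTop) {C : ℝ} (hgC : ∀ᶠ N in atTop, (g N : ℝ) ≤ C * N) :
    Tendsto (fun N : ℕ => (N : ℂ)⁻¹ * ∑ n ∈ Icc 1 (g N), f n) atTop (nhds 0) := by
  have hlim := (hf.comp hg).norm.const_mul C
  rw [norm_zero, mul_zero] at hlim
  refine squeeze_zero_norm' ?_ hlim
  filter_upwards [hgC, hg.eventually_ge_atTop 1] with N hN hg1
  have hg0 : (0 : ℝ) < g N := by exact_mod_cast hg1
  have hN0 : (0 : ℝ) < N := by
    rcases N.eq_zero_or_pos with rfl | h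
    · simp at hN; omega
    · exact_mod_cast h
  have hinv : (N : ℝ)⁻¹ ≤ C * (g N : ℝ)⁻¹ := by
    rwa [← div_eq_mul_inv, le_div_iff₀ hg0, inv_mul_le_iff₀ hN0, mul_comm]
  simp only [Function.comp, norm_mul, norm_inv, Complex.norm_natCast, ← mul_assoc]
  exact mul_le_mul_of_nonneg_right hinv (norm_nonneg _)

lemma norm_inv_mul_sum_Icc_div_le {f : ℕ → ℂ} (hf : ∀ n, ‖f n‖ ≤ 1) (M v : ℕ) :
    ‖(M : ℂ)⁻¹ * ∑ n ∈ Icc 1 (M / v), f n‖ ≤ (v : ℝ)⁻¹ := by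
  have hsum : ‖∑ n ∈ Icc 1 (M / v), f n‖ ≤ (M / v : ℕ) := by
    simpa using norm_sum_le_of_le (Icc 1 (M / v)) fun n _ => hf n
  rw [norm_mul, norm_inv, Complex.norm_natCast]
  rcases M.eq_zero_or_pos with rfl | hM
  · simp
  calc (M : ℝ)⁻¹ * ‖∑ n ∈ Icc 1 (M / v), f n‖ ≤ (M : ℝ)⁻¹ * (M / v) := by
        gcongr; exact hsum.trans Nat.cast_div_le
    _ = (v : ℝ)⁻¹ := by field_simp

lemma summable_indicator_factoredNumbers_inv (s : Finset ℕ) :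
    Summable ((Nat.factoredNumbers s).indicator fun v : ℕ => (v : ℝ)⁻¹) := by
  let f : ℕ →* ℝ :=
    { toFun n := (n : ℝ)⁻¹
      map_one' := by simp
      map_mul' x y := by push_cast; rw [mul_inv] }
  have hf {p : ℕ} (hp : p.Prime) : ‖f p‖ < 1 := by
    simpa [f, abs_inv] using inv_lt_one_of_one_lt₀ (by exact_mod_cast hp.one_lt : (1 : ℝ) < p)
  rw [← summable_subtype_iff_indicator]
  exact (EulerProduct.summable_and_hasSum_factoredNumbers_prod_filter_prime_geometric
    hf s).1.of_norm

section Characters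

variable {q : ℕ} [NeZero q] {u : ℕ → ℂ}

lemma hasMeanZero_ite_eq_of_isUnit
    (hχ : ∀ χ : DirichletCharacter ℂ q, HasMeanZero fun n => χ n * u n)
    {s : ZMod q} (hs : IsUnit s) :
    HasMeanZero fun n => if (n : ZMod q) = s then u n else 0 := by
  have hφ : (q.totient : ℂ) ≠ 0 := by exact_mod_cast (Nat.totient_pos.mpr (NeZero.pos q)).ne'
  have h := (hasMeanZero_finset_sum univ fun χ _ => (hχ χ).const_mul (χ s⁻¹)).const_mul
    (q.totient : ℂ)⁻¹
  convert h using 2 with n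
  simp_rw [← mul_assoc, ← sum_mul, DirichletCharacter.sum_char_inv_mul_char_eq ℂ hs, eq_comm]
  split_ifs <;> simp [hφ]

lemma hasMeanZero_ite_of_isUnit
    (hχ : ∀ χ : DirichletCharacter ℂ q, HasMeanZero fun n => χ n * u n)
    (P : ZMod q → Prop) [DecidablePred P] (hP : ∀ s, P s → IsUnit s) :
    HasMeanZero fun n => if P n then u n else 0 := by
  convert hasMeanZero_finset_sum {s | P s} fun s hs =>
    hasMeanZero_ite_eq_of_isUnit hχ (hP s (mem_filter.mp hs).2) using 2 with n
  rw [sum_ite_eq]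
  simp

end Characters

section Multiplicative

variable {a : ℕ} [NeZero a] {u : ℕ → ℂ}

open scoped Classical in
lemma sum_Icc_ite_natCast_eq_sum_factoredNumbers
    (hm : ∀ m n : ℕ, m.Coprime n → u (m * n) = u m * u n) (c : ZMod a) (M : ℕ) :
    ∑ m ∈ Icc 1 M, (if (m : ZMod a) = c then u m else 0) =
      ∑ v ∈ Icc 1 M with v ∈ Nat.factoredNumbers a.primeFactors, u v *
        ∑ w ∈ Icc 1 (M / v), if IsUnit (w : ZMod a) ∧ (v : ZMod a) * w = c then u w else 0 := by
  rw [Nat.sum_Icc_eq_sum_factoredNumbers_mul_coprime (NeZero.ne a)]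
  refine sum_congr rfl fun v hv => ?_
  have hvF := (mem_filter.mp hv).2
  calc _ = ∑ w ∈ Icc 1 (M / v) with w.Coprime a,
        u v * if IsUnit (w : ZMod a) ∧ (v : ZMod a) * w = c then u w else 0 := by
        refine sum_congr rfl fun w hw => ?_
        have hwa := (mem_filter.mp hw).2
        have hunit : IsUnit (w : ZMod a) := (ZMod.isUnit_iff_coprime w a).mpr hwa
        simp [hunit, hm v w (Nat.coprime_of_mem_factoredNumbers hvF hwa), mul_ite]
    _ = _ := by
        rw [mul_sum]
        refine sum_filter_of_ne fun w _ hw => (ZMod.isUnit_iff_coprime w a).mp ?_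
        by_contra hwa
        simp [hwa] at hw

lemma inv_mul_sum_Icc_ite_natCast_eq_tsum
    (hm : ∀ m n : ℕ, m.Coprime n → u (m * n) = u m * u n) (c : ZMod a) (M : ℕ) :
    (M : ℂ)⁻¹ * ∑ m ∈ Icc 1 M, (if (m : ZMod a) = c then u m else 0) =
      ∑' v, (Nat.factoredNumbers a.primeFactors).indicator (fun v => u v * ((M : ℂ)⁻¹ *
        ∑ w ∈ Icc 1 (M / v), if IsUnit (w : ZMod a) ∧ (v : ZMod a) * w = c then u w else 0)) v := by
  classical
  rw [sum_Icc_ite_natCast_eq_sum_factoredNumbers hm, sum_filter, mul_sum,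
    tsum_eq_sum (s := Icc 1 M) fun v hv => ?_]
  · refine sum_congr rfl fun v _ => ?_
    simp only [Set.indicator_apply]
    split_ifs <;> ring
  · by_cases hvF : v ∈ Nat.factoredNumbers a.primeFactors
    · have hMv : M / v = 0 :=
        Nat.div_eq_of_lt (by simp at hv; have := Nat.ne_zero_of_mem_factoredNumbers hvF; omega)
      simp [hMv]
    · simp [hvF]

theorem hasMeanZero_ite_natCast_eq (hm : ∀ m n : ℕ, m.Coprime n → u (m * n) = u m * u n)
    (hb : ∀ n, ‖u n‖ ≤ 1)
    (hχ : ∀ χ : DirichletCharacter ℂ a, HasMeanZero fun n => χ n * u n) (c : ZMod a) :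
    HasMeanZero fun m => if (m : ZMod a) = c then u m else 0 := by
  set F := Nat.factoredNumbers a.primeFactors
  let g (v w : ℕ) : ℂ := if IsUnit (w : ZMod a) ∧ (v : ZMod a) * w = c then u w else 0
  let φ (M v : ℕ) : ℂ := F.indicator (fun v => u v * ((M : ℂ)⁻¹ * ∑ w ∈ Icc 1 (M / v), g v w)) v
  have hφ_lim (v : ℕ) : Tendsto (fun M => φ M v) atTop (nhds 0) := by
    by_cases hv : v ∈ F
    · have hg : HasMeanZero (g v) :=
        hasMeanZero_ite_of_isUnit hχ (fun s => IsUnit s ∧ (v : ZMod a) * s = c) fun _ hs => hs.1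
      have := (hg.tendsto_inv_mul_sum_comp
        (Nat.tendsto_div_const_atTop (Nat.ne_zero_of_mem_factoredNumbers hv)) (C := 1)
        (.of_forall fun M => by simpa using Nat.div_le_self M v)).const_mul (u v)
      simpa [φ, Set.indicator_of_mem hv] using this
    · simp [φ, Set.indicator_of_notMem hv]
  have hφ_le (M v : ℕ) : ‖φ M v‖ ≤ F.indicator (fun v : ℕ => (v : ℝ)⁻¹) v := by
    by_cases hv : v ∈ F
    · simp only [φ, Set.indicator_of_mem hv]
      rw [norm_mul]
      refine (mul_le_of_le_one_left (norm_nonneg _) (hb v)).trans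
        (norm_inv_mul_sum_Icc_div_le (fun w => ?_) M v)
      simp only [g]; split_ifs <;> simp [hb]
    · simp [φ, hv]
  have hφ (M : ℕ) :
      (M : ℂ)⁻¹ * ∑ m ∈ Icc 1 M, (if (m : ZMod a) = c then u m else 0) = ∑' v, φ M v :=
    inv_mul_sum_Icc_ite_natCast_eq_tsum hm c M
  unfold HasMeanZero
  simp_rw [hφ]
  simpa using tendsto_tsum_of_dominated_convergence (summable_indicator_factoredNumbers_inv _)
    hφ_lim (.of_forall fun M => hφ_le M)

end Multiplicative

lemma sum_Icc_ite_natCast_eq_add_sum_mul_add {β : Type*} [AddCommMonoid β] {a : ℕ} (ha : 0 < a)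
    (f : ℕ → β) (r N : ℕ) :
    ∑ m ∈ Icc 1 (a * N + r), (if (m : ZMod a) = r then f m else 0) =
      ∑ m ∈ Icc 1 r, (if (m : ZMod a) = r then f m else 0) + ∑ n ∈ Icc 1 N, f (a * n + r) := by
  have himage :
      {m ∈ Ioc r (a * N + r) | ((m : ℕ) : ZMod a) = r} = (Icc 1 N).image (a * · + r) := by
    ext m
    simp only [mem_filter, mem_Ioc, mem_image, mem_Icc]
    constructor
    · rintro ⟨⟨hrm, hmN⟩, hmr⟩
      obtain ⟨k, hk⟩ :=
        (Nat.modEq_iff_dvd' hrm.le).mp ((ZMod.natCast_eq_natCast_iff _ _ _).mp hmr).symm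
      refine ⟨k, ⟨?_, Nat.le_of_mul_le_mul_left (by omega) ha⟩, by omega⟩
      rcases k.eq_zero_or_pos with rfl | hk0
      · omega
      · exact hk0
    · rintro ⟨n, ⟨hn1, hnN⟩, rfl⟩
      exact ⟨⟨by nlinarith, by nlinarith⟩, by simp⟩
  have hinj : Set.InjOn (a * · + r) (Icc 1 N : Set ℕ) := fun m _ n _ h => by
    simpa [ha.ne'] using h
  have hIoc (M : ℕ) : Icc 1 M = Ioc 0 M := Icc_add_one_left_eq_Ioc 0 M
  rw [hIoc, hIoc, ← sum_Ioc_consecutive _ (Nat.zero_le r) (Nat.le_add_left r (a * N))]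
  congr 1
  rw [← sum_filter, himage, sum_image hinj]

theorem aperiodic_of_mean_zero_against_characters_general (u : ℕ → ℂ)
    (hm : ∀ m n : ℕ, Nat.Coprime m n → u (m * n) = u m * u n)
    (hb : ∀ n : ℕ, ‖u n‖ ≤ 1)
    (hχ : ∀ q : ℕ, 0 < q → ∀ χ : DirichletCharacter ℂ q,
      Tendsto (fun N : ℕ => (N : ℂ)⁻¹ * ∑ n ∈ Finset.Icc 1 N, χ (n : ZMod q) * u n)
        atTop (nhds 0)) :
    ∀ a r : ℕ, 0 < a → 0 < r →
      Tendsto (fun N : ℕ => (N : ℂ)⁻¹ * ∑ n ∈ Finset.Icc 1 N, u (a * n + r))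
        atTop (nhds 0) := by
  intro a r ha _
  have : NeZero a := ⟨ha.ne'⟩
  let P (M : ℕ) : ℂ := ∑ m ∈ Icc 1 M, if ((m : ℕ) : ZMod a) = r then u m else 0
  have hP : Tendsto (fun N : ℕ => (N : ℂ)⁻¹ * P (a * N + r)) atTop (nhds 0) :=
    (hasMeanZero_ite_natCast_eq hm hb (hχ a ha) r).tendsto_inv_mul_sum_comp
      (tendsto_atTop_mono (fun N => Nat.le_add_right_of_le (Nat.le_mul_of_pos_left N ha))
        tendsto_id) (C := a + r)
      (eventually_ge_atTop 1 |>.mono fun N hN => by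
        have : (1 : ℝ) ≤ N := by exact_mod_cast hN
        push_cast; nlinarith)
  have hconst : Tendsto (fun N : ℕ => (N : ℂ)⁻¹ * P r) atTop (nhds 0) := by
    simpa using (tendsto_inv_atTop_nhds_zero_nat (𝕜 := ℂ)).mul_const (P r)
  convert hP.sub hconst using 2 with N
  · simp only [P]
    rw [sum_Icc_ite_natCast_eq_add_sum_mul_add ha u r N]
    ring
  · simp

theorem aperiodic_of_mean_zero_against_characters (u : ℕ → ℂ)
    (h1 : u 1 = 1) (hm : ∀ m n : ℕ, Nat.Coprime m n → u (m * n) = u m * u n)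
    (hb : ∀ n : ℕ, ‖u n‖ ≤ 1)
    (hχ : ∀ q : ℕ, 0 < q → ∀ χ : DirichletCharacter ℂ q,
      Tendsto (fun N : ℕ => (N : ℂ)⁻¹ * ∑ n ∈ Finset.Icc 1 N, χ (n : ZMod q) * u n)
        atTop (nhds 0)) :
    ∀ a r : ℕ, 0 < a → 0 < r →
      Tendsto (fun N : ℕ => (N : ℂ)⁻¹ * ∑ n ∈ Finset.Icc 1 N, u (a * n + r))
        atTop (nhds 0) :=
  aperiodic_of_mean_zero_against_characters_general u hm hb hχ
end
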